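/- arXiv:1405.3088 — 6 statements merged into one kernel-verified Lean document; each statement's English description precedes it below -/
import Mathlib

section
/- Define p₂ on the kernel of p₁ in 𝓕 by p₂(F)(x,y,z) = η(y)F(φ²x, ξ, φ²z) + η(z)F(φ²x, φ²y, ξ). Then p₂∘p₂ = p₂. -/
/-!
Since `η ∘ φ = 0`, the structure equation `φ² = -1 + η ⊗ ξ` gives `φ⁴ = -φ²`. The values of `F`
that `p₂ F` reads, `F(φ²x, ξ, φ²z)` and `F(φ²x, φ²y, ξ)`, are therefore reproduced by `p₂ F`
itself up to two sign changes, which cancel because `F` is odd in each argument.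
-/

namespace AlmostContact

variable {R V : Type*} [CommRing R] [AddCommGroup V] [Module R V]
  {φ : V →ₗ[R] V} {ξ : V} {η : V →ₗ[R] R}

def p₂ (φ : V →ₗ[R] V) (ξ : V) (η : V →ₗ[R] R) (f : V → V → V → R) : V → V → V → R :=
  fun x y z => η y * f (φ (φ x)) ξ (φ (φ z)) + η z * f (φ (φ x)) (φ (φ y)) ξ

theorem phi_four (hφ2 : ∀ x, φ (φ x) = -x + η x • ξ) (hηφ : ∀ x, η (φ x) = 0) (x : V) :
    φ (φ (φ (φ x))) = -φ (φ x) := by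
  rw [hφ2 (φ (φ x)), hηφ, zero_smul, add_zero]

variable (hφ2 : ∀ x, φ (φ x) = -x + η x • ξ) (hηφ : ∀ x, η (φ x) = 0) (hηξ : η ξ = 1)
  {f : V → V → V → R}
include hφ2 hηφ hηξ

theorem p₂_apply_xi_phi_sq (hf₁ : ∀ a b c, f (-a) b c = -f a b c)
    (hf₃ : ∀ a b c, f a b (-c) = -f a b c) (x z : V) :
    p₂ φ ξ η f (φ (φ x)) ξ (φ (φ z)) = f (φ (φ x)) ξ (φ (φ z)) := by
  simp only [p₂, hηξ, hηφ, phi_four hφ2 hηφ, hf₁, hf₃, neg_neg, one_mul, zero_mul, add_zero]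

theorem p₂_apply_phi_sq_xi (hf₁ : ∀ a b c, f (-a) b c = -f a b c)
    (hf₂ : ∀ a b c, f a (-b) c = -f a b c) (x y : V) :
    p₂ φ ξ η f (φ (φ x)) (φ (φ y)) ξ = f (φ (φ x)) (φ (φ y)) ξ := by
  simp only [p₂, hηξ, hηφ, phi_four hφ2 hηφ, hf₁, hf₂, neg_neg, one_mul, zero_mul, zero_add]

theorem p₂_p₂ (hf₁ : ∀ a b c, f (-a) b c = -f a b c) (hf₂ : ∀ a b c, f a (-b) c = -f a b c)
    (hf₃ : ∀ a b c, f a b (-c) = -f a b c) :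
    p₂ φ ξ η (p₂ φ ξ η f) = p₂ φ ξ η f := by
  funext x y z
  change η y * p₂ φ ξ η f (φ (φ x)) ξ (φ (φ z)) + η z * p₂ φ ξ η f (φ (φ x)) (φ (φ y)) ξ = _
  rw [p₂_apply_xi_phi_sq hφ2 hηφ hηξ hf₁ hf₃, p₂_apply_phi_sq_xi hφ2 hηφ hηξ hf₁ hf₂]
  rfl

end AlmostContact

theorem p2_idempotent_general {V : Type*} [AddCommGroup V] [Module ℝ V]
    (φ : V →ₗ[ℝ] V) (ξ : V) (η : V →ₗ[ℝ] ℝ)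
    (hφ2 : ∀ x, φ (φ x) = -x + η x • ξ)
    (hηφ : ∀ x, η (φ x) = 0) (hηξ : η ξ = 1)
    (F : V → V → V → ℝ)
    (hF1 : ∀ y z, IsLinearMap ℝ (fun x => F x y z))
    (hF2 : ∀ x z, IsLinearMap ℝ (fun y => F x y z))
    (hF3 : ∀ x y, IsLinearMap ℝ (fun z => F x y z)) :
    let p₂ : (V → V → V → ℝ) → (V → V → V → ℝ) :=
      fun f x y z => η y * f (φ (φ x)) ξ (φ (φ z)) + η z * f (φ (φ x)) (φ (φ y)) ξ
    ∀ x y z, p₂ (p₂ F) x y z = p₂ F x y z := by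
  intro _
  exact congrFun₃ <| AlmostContact.p₂_p₂ hφ2 hηφ hηξ
    (fun a b c => (hF1 b c).map_neg a) (fun a b c => (hF2 a c).map_neg b)
    (fun a b c => (hF3 a b).map_neg c)

/-- On the kernel of p₁ in 𝓕, the operator
p₂(F)(x,y,z) = η(y)F(φ²x,ξ,φ²z) + η(z)F(φ²x,φ²y,ξ) is idempotent. -/
theorem p2_idempotent {V : Type*} [AddCommGroup V] [Module ℝ V]
    (φ : V →ₗ[ℝ] V) (ξ : V) (η : V →ₗ[ℝ] ℝ)
    (hφξ : φ ξ = 0) (hφ2 : ∀ x, φ (φ x) = -x + η x • ξ)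
    (hηφ : ∀ x, η (φ x) = 0) (hηξ : η ξ = 1)
    (F : V → V → V → ℝ)
    (hF1 : ∀ y z, IsLinearMap ℝ (fun x => F x y z))
    (hF2 : ∀ x z, IsLinearMap ℝ (fun y => F x y z))
    (hF3 : ∀ x y, IsLinearMap ℝ (fun z => F x y z))
    (hFsym : ∀ x y z, F x y z = F x z y)
    (hFprop : ∀ x y z, F x y z = F x (φ y) (φ z) + η y * F x ξ z + η z * F x y ξ)
    (hker : ∀ x y z, -(F (φ (φ x)) (φ (φ y)) (φ (φ z))) = 0) :
    let p₂ : (V → V → V → ℝ) → (V → V → V → ℝ) :=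
      fun f x y z => η y * f (φ (φ x)) ξ (φ (φ z)) + η z * f (φ (φ x)) (φ (φ y)) ξ
    ∀ x y z, p₂ (p₂ F) x y z = p₂ F x y z :=
  p2_idempotent_general φ ξ η hφ2 hηφ hηξ F hF1 hF2 hF3
end

section
/- Define p₃ on the kernel of p₂ by p₃(F)(x,y,z) = η(x)F(ξ, φ²y, φ²z). Then p₃∘p₃ = p₃. -/
/-! Since `η ∘ φ = 0`, applying `φ² = -id + η ⊗ ξ` to `φ² w` gives `φ⁴ = -φ²`. Hence
`p₃(p₃ F)(x,y,z) = η(x) η(ξ) F(ξ, φ⁴y, φ⁴z) = η(x) F(ξ, -φ²y, -φ²z)`, and the two signs cancel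
because `F` is linear in its last two arguments. -/

theorem LinearMap.apply_apply_apply_apply_eq_neg_of_sq_eq {R V : Type*} [CommRing R]
    [AddCommGroup V] [Module R V] (φ : V →ₗ[R] V) (ξ : V) (η : V →ₗ[R] R)
    (hφ2 : ∀ x, φ (φ x) = -x + η x • ξ) (hηφ : ∀ x, η (φ x) = 0) (w : V) :
    φ (φ (φ (φ w))) = -φ (φ w) := by
  rw [hφ2 (φ (φ w)), hηφ (φ w), zero_smul, add_zero]

theorem apply_neg_neg_of_isLinearMap {R V W : Type*} [CommRing R] [AddCommGroup V] [Module R V]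
    [AddCommGroup W] [Module R W] (G : V → V → W)
    (hG₁ : ∀ z, IsLinearMap R (fun y => G y z)) (hG₂ : ∀ y, IsLinearMap R (fun z => G y z))
    (y z : V) : G (-y) (-z) = G y z := by
  rw [(hG₁ _).map_neg, (hG₂ _).map_neg, neg_neg]

theorem p3_idempotent_general {V : Type*} [AddCommGroup V] [Module ℝ V]
    (φ : V →ₗ[ℝ] V) (ξ : V) (η : V →ₗ[ℝ] ℝ)
    (hφ2 : ∀ x, φ (φ x) = -x + η x • ξ)
    (hηφ : ∀ x, η (φ x) = 0) (hηξ : η ξ = 1)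
    (F : V → V → V → ℝ)
    (hF2 : ∀ x z, IsLinearMap ℝ (fun y => F x y z))
    (hF3 : ∀ x y, IsLinearMap ℝ (fun z => F x y z)) :
    let p₃ : (V → V → V → ℝ) → (V → V → V → ℝ) :=
      fun f x y z => η x * f ξ (φ (φ y)) (φ (φ z))
    ∀ x y z, p₃ (p₃ F) x y z = p₃ F x y z := by
  intro p₃ x y z
  have hφ4 := φ.apply_apply_apply_apply_eq_neg_of_sq_eq ξ η hφ2 hηφ
  show η x * (η ξ * F ξ (φ (φ (φ (φ y)))) (φ (φ (φ (φ z))))) = η x * F ξ (φ (φ y)) (φ (φ z))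
  rw [hηξ, one_mul, hφ4, hφ4, apply_neg_neg_of_isLinearMap (F ξ) (hF2 ξ) (hF3 ξ)]

/-- On the kernel of p₂ (inside ker p₁ in 𝓕), the operator
p₃(F)(x,y,z) = η(x)F(ξ,φ²y,φ²z) is idempotent. -/
theorem p3_idempotent {V : Type*} [AddCommGroup V] [Module ℝ V]
    (φ : V →ₗ[ℝ] V) (ξ : V) (η : V →ₗ[ℝ] ℝ)
    (hφξ : φ ξ = 0) (hφ2 : ∀ x, φ (φ x) = -x + η x • ξ)
    (hηφ : ∀ x, η (φ x) = 0) (hηξ : η ξ = 1)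
    (F : V → V → V → ℝ)
    (hF1 : ∀ y z, IsLinearMap ℝ (fun x => F x y z))
    (hF2 : ∀ x z, IsLinearMap ℝ (fun y => F x y z))
    (hF3 : ∀ x y, IsLinearMap ℝ (fun z => F x y z))
    (hFsym : ∀ x y z, F x y z = F x z y)
    (hFprop : ∀ x y z, F x y z = F x (φ y) (φ z) + η y * F x ξ z + η z * F x y ξ)
    (hker₁ : ∀ x y z, -(F (φ (φ x)) (φ (φ y)) (φ (φ z))) = 0)
    (hker₂ : ∀ x y z,
      η y * F (φ (φ x)) ξ (φ (φ z)) + η z * F (φ (φ x)) (φ (φ y)) ξ = 0) :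
    let p₃ : (V → V → V → ℝ) → (V → V → V → ℝ) :=
      fun f x y z => η x * f ξ (φ (φ y)) (φ (φ z))
    ∀ x y z, p₃ (p₃ F) x y z = p₃ F x y z :=
  p3_idempotent_general φ ξ η hφ2 hηφ hηξ F hF2 hF3
end

section
/- For any structure tensor F ∈ 𝓕 on an almost contact vector space, F decomposes as F = p₁(F) + p₂(F) + p₃(F) + p₄(F), where p₁(F)(x,y,z) = -F(φ²x,φ²y,φ²z), p₂(F)(x,y,z) = η(y)F(φ²x,ξ,φ²z) + η(z)F(φ²x,φ²y,ξ), p₃(F)(x,y,z) = η(x)F(ξ,φ²y,φ²z), and p₄(F)(x,y,z) = -η(x){η(y)F(ξ,ξ,φ²z) + η(z)F(ξ,φ²y,ξ)}. -/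
/-!
Since `φ² = -id + η ⊗ ξ`, every vector splits as `x = -φ²x + η(x) ξ`. Expanding `F(x, y, z)`
trilinearly along these splittings gives eight terms: six of them are the `p₁, …, p₄` parts, and the
remaining two contain `F(·, ξ, ξ)`, which vanishes by the defining identity of `𝓕` at `y = z = ξ`.
-/

section

variable {V : Type*} [AddCommGroup V] [Module ℝ V]

lemma apply_ξ_ξ_eq_zero {φ : V →ₗ[ℝ] V} {ξ : V} {η : V →ₗ[ℝ] ℝ}
    (hφξ : φ ξ = 0) (hηξ : η ξ = 1) {F : V → V → V → ℝ}
    (hF3 : ∀ x y, IsLinearMap ℝ (fun z => F x y z))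
    (hFprop : ∀ x y z, F x y z = F x (φ y) (φ z) + η y * F x ξ z + η z * F x y ξ) (x : V) :
    F x ξ ξ = 0 := by
  have h := hFprop x ξ ξ
  rw [hφξ, (hF3 x 0).map_zero, hηξ] at h
  linarith

lemma trilinear_apply_eq_of_split {P : V → V} {η : V → ℝ} {ξ : V}
    (hP : ∀ x, -P x + η x • ξ = x) {F : V → V → V → ℝ}
    (hF1 : ∀ y z, IsLinearMap ℝ (fun x => F x y z))
    (hF2 : ∀ x z, IsLinearMap ℝ (fun y => F x y z))
    (hF3 : ∀ x y, IsLinearMap ℝ (fun z => F x y z))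
    (hξξ : ∀ x, F x ξ ξ = 0) (x y z : V) :
    F x y z =
      -F (P x) (P y) (P z)
      + (η y * F (P x) ξ (P z) + η z * F (P x) (P y) ξ)
      + η x * F ξ (P y) (P z)
      + -(η x * (η y * F ξ ξ (P z) + η z * F ξ (P y) ξ)) := by
  calc F x y z = F (-P x + η x • ξ) (-P y + η y • ξ) (-P z + η z • ξ) := by
        rw [hP x, hP y, hP z]
    _ = _ := by
        simp only [(hF1 _ _).map_add, (hF1 _ _).map_smul, (hF1 _ _).map_neg,
          (hF2 _ _).map_add, (hF2 _ _).map_smul, (hF2 _ _).map_neg,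
          (hF3 _ _).map_add, (hF3 _ _).map_smul, (hF3 _ _).map_neg, smul_eq_mul]
        linear_combination (η y * η z) * (η x * hξξ ξ - hξξ (P x))

end

theorem F_decomposition_general {V : Type*} [AddCommGroup V] [Module ℝ V]
    (φ : V →ₗ[ℝ] V) (ξ : V) (η : V →ₗ[ℝ] ℝ)
    (hφξ : φ ξ = 0) (hφ2 : ∀ x, φ (φ x) = -x + η x • ξ)
    (hηξ : η ξ = 1)
    (F : V → V → V → ℝ)
    (hF1 : ∀ y z, IsLinearMap ℝ (fun x => F x y z))
    (hF2 : ∀ x z, IsLinearMap ℝ (fun y => F x y z))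
    (hF3 : ∀ x y, IsLinearMap ℝ (fun z => F x y z))
    (hFprop : ∀ x y z, F x y z = F x (φ y) (φ z) + η y * F x ξ z + η z * F x y ξ) :
    ∀ x y z, F x y z =
      (-(F (φ (φ x)) (φ (φ y)) (φ (φ z))))
      + (η y * F (φ (φ x)) ξ (φ (φ z)) + η z * F (φ (φ x)) (φ (φ y)) ξ)
      + (η x * F ξ (φ (φ y)) (φ (φ z)))
      + (-(η x * (η y * F ξ ξ (φ (φ z)) + η z * F ξ (φ (φ y)) ξ))) := by
  have hsplit : ∀ x, -φ (φ x) + η x • ξ = x := fun x => by rw [hφ2]; abel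
  exact trilinear_apply_eq_of_split hsplit hF1 hF2 hF3
    (apply_ξ_ξ_eq_zero hφξ hηξ hF3 hFprop)

/-- Every structure tensor F decomposes as F = p₁(F) + p₂(F) + p₃(F) + p₄(F). -/
theorem F_decomposition {V : Type*} [AddCommGroup V] [Module ℝ V]
    (φ : V →ₗ[ℝ] V) (ξ : V) (η : V →ₗ[ℝ] ℝ)
    (hφξ : φ ξ = 0) (hφ2 : ∀ x, φ (φ x) = -x + η x • ξ)
    (hηφ : ∀ x, η (φ x) = 0) (hηξ : η ξ = 1)
    (F : V → V → V → ℝ)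
    (hF1 : ∀ y z, IsLinearMap ℝ (fun x => F x y z))
    (hF2 : ∀ x z, IsLinearMap ℝ (fun y => F x y z))
    (hF3 : ∀ x y, IsLinearMap ℝ (fun z => F x y z))
    (hFsym : ∀ x y z, F x y z = F x z y)
    (hFprop : ∀ x y z, F x y z = F x (φ y) (φ z) + η y * F x ξ z + η z * F x y ξ) :
    ∀ x y z, F x y z =
      (-(F (φ (φ x)) (φ (φ y)) (φ (φ z))))
      + (η y * F (φ (φ x)) ξ (φ (φ z)) + η z * F (φ (φ x)) (φ (φ y)) ξ)
      + (η x * F ξ (φ (φ y)) (φ (φ z)))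
      + (-(η x * (η y * F ξ ξ (φ (φ z)) + η z * F ξ (φ (φ y)) ξ))) :=
  F_decomposition_general φ ξ η hφξ hφ2 hηξ F hF1 hF2 hF3 hFprop
end

section
/- Let F be a structure tensor in W₂, i.e. F(x,y,z) = η(y)F(φ²x,ξ,φ²z) + η(z)F(φ²x,φ²y,ξ). Define L₁(F)(x,y,z) = F(φx,φy,ξ)η(z) + F(φx,φz,ξ)η(y). Then L₁ maps W₂ to W₂ and L₁∘L₁ = id on W₂. -/
/-!
A tensor in `W₂` is recovered from its values `F (φ² x) (φ² y) ξ` by the defining identity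
of `W₂` (and symmetry), while `L₁ F (φ x) (φ y) ξ = F (φ² x) (φ² y) ξ` because `φ ξ = 0`
and `η ξ = 1`; this gives `L₁ (L₁ F) = F`. That `L₁ F` lies in `W₂` again comes from
`φ³ = -φ` and the evenness of `F (·) (·) ξ`.
-/

namespace AlmostContact

variable {V : Type*} [AddCommGroup V] [Module ℝ V] {φ : V →ₗ[ℝ] V} {ξ : V} {η : V →ₗ[ℝ] ℝ}

theorem phi_phi_phi (hφ2 : ∀ x, φ (φ x) = -x + η x • ξ) (hηφ : ∀ x, η (φ x) = 0) (x : V) :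
    φ (φ (φ x)) = -φ x := by
  rw [hφ2 (φ x), hηφ, zero_smul, add_zero]

variable (φ ξ η) in
def L1 (f : V → V → V → ℝ) : V → V → V → ℝ :=
  fun x y z => f (φ x) (φ y) ξ * η z + f (φ x) (φ z) ξ * η y

variable {f : V → V → V → ℝ}

theorem L1_comm (x y z : V) : L1 φ ξ η f x y z = L1 φ ξ η f x z y :=
  add_comm _ _

theorem L1_isLinearMap_fst (hf1 : ∀ y z, IsLinearMap ℝ (fun x => f x y z)) (y z : V) :
    IsLinearMap ℝ (fun x => L1 φ ξ η f x y z) := by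
  constructor
  · intro a b
    simp only [L1, map_add, (hf1 _ ξ).map_add]
    ring
  · intro c a
    simp only [L1, map_smul, (hf1 _ ξ).map_smul, smul_eq_mul]
    ring

theorem L1_isLinearMap_snd (hf2 : ∀ x z, IsLinearMap ℝ (fun y => f x y z)) (x z : V) :
    IsLinearMap ℝ (fun y => L1 φ ξ η f x y z) := by
  constructor
  · intro a b
    simp only [L1, map_add, (hf2 _ ξ).map_add]
    ring
  · intro c a
    simp only [L1, map_smul, (hf2 _ ξ).map_smul, smul_eq_mul]
    ring

theorem L1_isLinearMap_thd (hf2 : ∀ x z, IsLinearMap ℝ (fun y => f x y z)) (x y : V) :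
    IsLinearMap ℝ (fun z => L1 φ ξ η f x y z) := by
  have hswap : (fun z => L1 φ ξ η f x y z) = fun z => L1 φ ξ η f x z y :=
    funext fun z => L1_comm x y z
  rw [hswap]
  exact L1_isLinearMap_snd hf2 x y

theorem L1_apply_xi (hφξ : φ ξ = 0) (hηξ : η ξ = 1)
    (hf2 : ∀ x z, IsLinearMap ℝ (fun y => f x y z)) (x y : V) :
    L1 φ ξ η f x y ξ = f (φ x) (φ y) ξ := by
  simp only [L1, hφξ, (hf2 _ ξ).map_zero, hηξ, mul_one, zero_mul, add_zero]

theorem L1_structure_identity (hφξ : φ ξ = 0) (hηφ : ∀ x, η (φ x) = 0) (hηξ : η ξ = 1)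
    (hf2 : ∀ x z, IsLinearMap ℝ (fun y => f x y z)) (x y z : V) :
    L1 φ ξ η f x y z
      = L1 φ ξ η f x (φ y) (φ z) + η y * L1 φ ξ η f x ξ z + η z * L1 φ ξ η f x y ξ := by
  rw [L1_comm x ξ z, L1_apply_xi hφξ hηξ hf2, L1_apply_xi hφξ hηξ hf2]
  simp only [L1, hηφ]
  ring

theorem L1_mem_W2 (hφξ : φ ξ = 0) (hφ2 : ∀ x, φ (φ x) = -x + η x • ξ)
    (hηφ : ∀ x, η (φ x) = 0) (hηξ : η ξ = 1)
    (hf1 : ∀ y z, IsLinearMap ℝ (fun x => f x y z))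
    (hf2 : ∀ x z, IsLinearMap ℝ (fun y => f x y z)) (x y z : V) :
    L1 φ ξ η f x y z
      = η y * L1 φ ξ η f (φ (φ x)) ξ (φ (φ z)) + η z * L1 φ ξ η f (φ (φ x)) (φ (φ y)) ξ := by
  have heven : ∀ a b, f (-a) (-b) ξ = f a b ξ := fun a b => by
    rw [(hf1 _ ξ).map_neg, (hf2 _ ξ).map_neg, neg_neg]
  rw [L1_comm (φ (φ x)) ξ, L1_apply_xi hφξ hηξ hf2, L1_apply_xi hφξ hηξ hf2]
  simp only [L1, phi_phi_phi hφ2 hηφ, heven]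
  ring

theorem L1_L1_of_mem_W2 (hφξ : φ ξ = 0) (hηξ : η ξ = 1)
    (hf2 : ∀ x z, IsLinearMap ℝ (fun y => f x y z)) (hfsymm : ∀ x y z, f x y z = f x z y)
    (hW2 : ∀ x y z, f x y z = η y * f (φ (φ x)) ξ (φ (φ z)) + η z * f (φ (φ x)) (φ (φ y)) ξ)
    (x y z : V) :
    L1 φ ξ η (L1 φ ξ η f) x y z = f x y z := by
  rw [L1, L1_apply_xi hφξ hηξ hf2, L1_apply_xi hφξ hηξ hf2, hW2 x y z, hfsymm _ ξ]
  ring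

end AlmostContact

open AlmostContact in
theorem L1_involution_general {V : Type*} [AddCommGroup V] [Module ℝ V]
    (φ : V →ₗ[ℝ] V) (ξ : V) (η : V →ₗ[ℝ] ℝ)
    (hφξ : φ ξ = 0) (hφ2 : ∀ x, φ (φ x) = -x + η x • ξ)
    (hηφ : ∀ x, η (φ x) = 0) (hηξ : η ξ = 1)
    (F : V → V → V → ℝ)
    (hF1 : ∀ y z, IsLinearMap ℝ (fun x => F x y z))
    (hF2 : ∀ x z, IsLinearMap ℝ (fun y => F x y z))
    (hFsym : ∀ x y z, F x y z = F x z y)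
    (hW2 : ∀ x y z, F x y z
      = η y * F (φ (φ x)) ξ (φ (φ z)) + η z * F (φ (φ x)) (φ (φ y)) ξ) :
    let L₁ : (V → V → V → ℝ) → (V → V → V → ℝ) :=
      fun f x y z => f (φ x) (φ y) ξ * η z + f (φ x) (φ z) ξ * η y
    (∀ y z, IsLinearMap ℝ (fun x => L₁ F x y z)) ∧
    (∀ x z, IsLinearMap ℝ (fun y => L₁ F x y z)) ∧
    (∀ x y, IsLinearMap ℝ (fun z => L₁ F x y z)) ∧
    (∀ x y z, L₁ F x y z = L₁ F x z y) ∧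
    (∀ x y z, L₁ F x y z
      = L₁ F x (φ y) (φ z) + η y * L₁ F x ξ z + η z * L₁ F x y ξ) ∧
    (∀ x y z, L₁ F x y z
      = η y * L₁ F (φ (φ x)) ξ (φ (φ z)) + η z * L₁ F (φ (φ x)) (φ (φ y)) ξ) ∧
    (∀ x y z, L₁ (L₁ F) x y z = F x y z) :=
  ⟨L1_isLinearMap_fst hF1, L1_isLinearMap_snd hF2, L1_isLinearMap_thd hF2, L1_comm,
    L1_structure_identity hφξ hηφ hηξ hF2, L1_mem_W2 hφξ hφ2 hηφ hηξ hF1 hF2,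
    L1_L1_of_mem_W2 hφξ hηξ hF2 hFsym hW2⟩

/-- L₁(F)(x,y,z) = F(φx,φy,ξ)η(z) + F(φx,φz,ξ)η(y) maps W₂ to W₂ and is an
involution on W₂. -/
theorem L1_involution {V : Type*} [AddCommGroup V] [Module ℝ V]
    (φ : V →ₗ[ℝ] V) (ξ : V) (η : V →ₗ[ℝ] ℝ)
    (hφξ : φ ξ = 0) (hφ2 : ∀ x, φ (φ x) = -x + η x • ξ)
    (hηφ : ∀ x, η (φ x) = 0) (hηξ : η ξ = 1)
    (F : V → V → V → ℝ)
    (hF1 : ∀ y z, IsLinearMap ℝ (fun x => F x y z))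
    (hF2 : ∀ x z, IsLinearMap ℝ (fun y => F x y z))
    (hF3 : ∀ x y, IsLinearMap ℝ (fun z => F x y z))
    (hFsym : ∀ x y z, F x y z = F x z y)
    (hFprop : ∀ x y z, F x y z = F x (φ y) (φ z) + η y * F x ξ z + η z * F x y ξ)
    (hW2 : ∀ x y z, F x y z
      = η y * F (φ (φ x)) ξ (φ (φ z)) + η z * F (φ (φ x)) (φ (φ y)) ξ) :
    let L₁ : (V → V → V → ℝ) → (V → V → V → ℝ) :=
      fun f x y z => f (φ x) (φ y) ξ * η z + f (φ x) (φ z) ξ * η y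
    (∀ y z, IsLinearMap ℝ (fun x => L₁ F x y z)) ∧
    (∀ x z, IsLinearMap ℝ (fun y => L₁ F x y z)) ∧
    (∀ x y, IsLinearMap ℝ (fun z => L₁ F x y z)) ∧
    (∀ x y z, L₁ F x y z = L₁ F x z y) ∧
    (∀ x y z, L₁ F x y z
      = L₁ F x (φ y) (φ z) + η y * L₁ F x ξ z + η z * L₁ F x y ξ) ∧
    (∀ x y z, L₁ F x y z
      = η y * L₁ F (φ (φ x)) ξ (φ (φ z)) + η z * L₁ F (φ (φ x)) (φ (φ y)) ξ) ∧
    (∀ x y z, L₁ (L₁ F) x y z = F x y z) :=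
  L1_involution_general φ ξ η hφξ hφ2 hηφ hηξ F hF1 hF2 hFsym hW2
end

section
/- Let (V, φ, ξ, η, g) be a 3-dimensional almost contact B-metric vector space with φ-basis e₀ = ξ, e₁ = e, e₂ = φe where g(e₀,e₀) = g(e₁,e₁) = -g(e₂,e₂) = 1 and off-diagonal entries vanish. If F is a structure tensor satisfying the F₃-conditions F(ξ,y,z) = F(x,ξ,z) = 0 and the cyclic identity F(x,y,z) + F(y,z,x) + F(z,x,y) = 0 for all x,y,z, then F = 0. -/
/-! Since `F` vanishes as soon as `ξ` occurs in any slot, only its values on the plane spanned by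
`e` and `φ e` matter. There, the compatibility `F(x,y,z) = F(x,φy,φz)` together with `φ² = -id`
forces `F(x,y,φy) = 0`, and the cyclic identity gives `F(y,y,y) = 0`; these two facts kill all
eight components `F(a,b,c)` with `a, b, c ∈ {e, φe}`. -/

theorem IsLinearMap.eq_zero_of_basis {R M N ι : Type*} [Semiring R] [AddCommMonoid M]
    [Module R M] [AddCommMonoid N] [Module R N] {G : M → N} (hG : IsLinearMap R G)
    (b : Module.Basis ι R M) (h : ∀ i, G (b i) = 0) (x : M) : G x = 0 := by
  simpa using LinearMap.congr_fun (b.ext (f₁ := hG.mk' G) (f₂ := 0) h) x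

theorem trilinear_eq_zero_of_basis {R M N ι : Type*} [Semiring R] [AddCommMonoid M]
    [Module R M] [AddCommMonoid N] [Module R N] (b : Module.Basis ι R M) {F : M → M → M → N}
    (hF1 : ∀ y z, IsLinearMap R (fun x => F x y z))
    (hF2 : ∀ x z, IsLinearMap R (fun y => F x y z))
    (hF3 : ∀ x y, IsLinearMap R (fun z => F x y z))
    (h : ∀ i j k, F (b i) (b j) (b k) = 0) (x y z : M) : F x y z = 0 :=
  (hF1 y z).eq_zero_of_basis b (fun i =>
    (hF2 (b i) z).eq_zero_of_basis b (fun j =>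
      (hF3 (b i) (b j)).eq_zero_of_basis b (fun k => h i j k) z) y) x

theorem apply_self_self_self_eq_zero {α : Type*} {F : α → α → α → ℝ}
    (hF3c : ∀ x y z, F x y z + F y z x + F z x y = 0) (y : α) : F y y y = 0 := by
  linarith [hF3c y y y]

section StructureTensor

variable {V : Type*} [AddCommGroup V] [Module ℝ V] {φ : V →ₗ[ℝ] V} {ξ : V} {η : V →ₗ[ℝ] ℝ}
  {F : V → V → V → ℝ}

theorem apply_phi_phi (hFsym : ∀ x y z, F x y z = F x z y)
    (hFprop : ∀ x y z, F x y z = F x (φ y) (φ z) + η y * F x ξ z + η z * F x y ξ)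
    (hF3b : ∀ x z, F x ξ z = 0) (x y z : V) : F x (φ y) (φ z) = F x y z := by
  rw [hFprop x y z, hF3b, hFsym x y ξ, hF3b]
  ring

theorem apply_self_phi_eq_zero (hφ2 : ∀ x, φ (φ x) = -x + η x • ξ)
    (hF3 : ∀ x y, IsLinearMap ℝ (fun z => F x y z)) (hFsym : ∀ x y z, F x y z = F x z y)
    (hFprop : ∀ x y z, F x y z = F x (φ y) (φ z) + η y * F x ξ z + η z * F x y ξ)
    (hF3b : ∀ x z, F x ξ z = 0) (x y : V) : F x y (φ y) = 0 := by
  have hlin := hF3 x (φ y)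
  have h : F x y (φ y) = -F x y (φ y) :=
    calc F x y (φ y) = F x (φ y) (φ (φ y)) := (apply_phi_phi hFsym hFprop hF3b x y (φ y)).symm
      _ = -F x (φ y) y + η y * F x (φ y) ξ := by
        rw [hφ2, hlin.map_add, hlin.map_neg, hlin.map_smul, smul_eq_mul]
      _ = -F x y (φ y) := by rw [hFsym x (φ y) ξ, hF3b, hFsym x (φ y) y]; ring
  linarith

theorem apply_eq_zero_of_mem_pair (hφ2 : ∀ x, φ (φ x) = -x + η x • ξ)
    (hF3 : ∀ x y, IsLinearMap ℝ (fun z => F x y z)) (hFsym : ∀ x y z, F x y z = F x z y)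
    (hFprop : ∀ x y z, F x y z = F x (φ y) (φ z) + η y * F x ξ z + η z * F x y ξ)
    (hF3b : ∀ x z, F x ξ z = 0) (hF3c : ∀ x y z, F x y z + F y z x + F z x y = 0)
    {e a b c : V} (ha : a ∈ ({e, φ e} : Set V)) (hb : b ∈ ({e, φ e} : Set V))
    (hc : c ∈ ({e, φ e} : Set V)) : F a b c = 0 := by
  have hphi := apply_phi_phi hFsym hFprop hF3b
  have hmix := apply_self_phi_eq_zero hφ2 hF3 hFsym hFprop hF3b
  have heee := apply_self_self_self_eq_zero hF3c e
  have hpee : F (φ e) e e = 0 := by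
    linarith [hF3c e e (φ e), hmix e e, hFsym e (φ e) e]
  rcases ha with rfl | rfl <;> rcases hb with rfl | rfl <;> rcases hc with rfl | rfl
  · exact heee
  · exact hmix _ _
  · rw [hFsym]; exact hmix _ _
  · rw [hphi]; exact heee
  · exact hpee
  · exact hmix _ _
  · rw [hFsym]; exact hmix _ _
  · rw [hphi]; exact hpee

end StructureTensor

theorem dim3_F3_zero_general {V : Type*} [AddCommGroup V] [Module ℝ V]
    (φ : V →ₗ[ℝ] V) (ξ : V) (η : V →ₗ[ℝ] ℝ)
    (hφ2 : ∀ x, φ (φ x) = -x + η x • ξ)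
    (e : V) (b : Module.Basis (Fin 3) ℝ V)
    (hb0 : b 0 = ξ) (hb1 : b 1 = e) (hb2 : b 2 = φ e)
    (F : V → V → V → ℝ)
    (hF1 : ∀ y z, IsLinearMap ℝ (fun x => F x y z))
    (hF2 : ∀ x z, IsLinearMap ℝ (fun y => F x y z))
    (hF3 : ∀ x y, IsLinearMap ℝ (fun z => F x y z))
    (hFsym : ∀ x y z, F x y z = F x z y)
    (hFprop : ∀ x y z, F x y z = F x (φ y) (φ z) + η y * F x ξ z + η z * F x y ξ)
    (hF3a : ∀ y z, F ξ y z = 0)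
    (hF3b : ∀ x z, F x ξ z = 0)
    (hF3c : ∀ x y z, F x y z + F y z x + F z x y = 0) :
    ∀ x y z, F x y z = 0 := by
  refine trilinear_eq_zero_of_basis b hF1 hF2 hF3 fun i j k => ?_
  have hb : ∀ i, b i = ξ ∨ b i ∈ ({e, φ e} : Set V) := by
    intro i
    fin_cases i <;> simp [hb0, hb1, hb2]
  rcases hb i with hi | hi
  · rw [hi, hF3a]
  rcases hb j with hj | hj
  · rw [hj, hF3b]
  rcases hb k with hk | hk
  · rw [hk, hFsym, hF3b]
  exact apply_eq_zero_of_mem_pair hφ2 hF3 hFsym hFprop hF3b hF3c hi hj hk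

/-- On a 3-dimensional almost contact B-metric vector space, the class 𝓕₃ reduces to
F = 0. -/
theorem dim3_F3_zero {V : Type*} [AddCommGroup V] [Module ℝ V]
    (φ : V →ₗ[ℝ] V) (ξ : V) (η : V →ₗ[ℝ] ℝ) (g : V →ₗ[ℝ] V →ₗ[ℝ] ℝ)
    (hφξ : φ ξ = 0) (hφ2 : ∀ x, φ (φ x) = -x + η x • ξ)
    (hηφ : ∀ x, η (φ x) = 0) (hηξ : η ξ = 1)
    (hsym : ∀ x y, g x y = g y x)
    (hcompat : ∀ x y, g (φ x) (φ y) = -(g x y) + η x * η y)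
    (e : V) (b : Module.Basis (Fin 3) ℝ V)
    (hb0 : b 0 = ξ) (hb1 : b 1 = e) (hb2 : b 2 = φ e)
    (hg00 : g ξ ξ = 1) (hg11 : g e e = 1) (hg22 : g (φ e) (φ e) = -1)
    (hg01 : g ξ e = 0) (hg02 : g ξ (φ e) = 0) (hg12 : g e (φ e) = 0)
    (F : V → V → V → ℝ)
    (hF1 : ∀ y z, IsLinearMap ℝ (fun x => F x y z))
    (hF2 : ∀ x z, IsLinearMap ℝ (fun y => F x y z))
    (hF3 : ∀ x y, IsLinearMap ℝ (fun z => F x y z))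
    (hFsym : ∀ x y z, F x y z = F x z y)
    (hFprop : ∀ x y z, F x y z = F x (φ y) (φ z) + η y * F x ξ z + η z * F x y ξ)
    (hF3a : ∀ y z, F ξ y z = 0)
    (hF3b : ∀ x z, F x ξ z = 0)
    (hF3c : ∀ x y z, F x y z + F y z x + F z x y = 0) :
    ∀ x y z, F x y z = 0 :=
  dim3_F3_zero_general φ ξ η hφ2 e b hb0 hb1 hb2 F hF1 hF2 hF3 hFsym hFprop hF3a hF3b hF3c
end

section
/- Let (V, φ, ξ, η, g) be a 3-dimensional almost contact B-metric vector space with orthonormal-type φ-basis {ξ, e, φe}. If F is a structure tensor satisfying the 𝓕₇-conditions F(x,y,z) = F(x,y,ξ)η(z) + F(x,z,ξ)η(y) and F(x,y,ξ) = -F(y,x,ξ) = -F(φx,φy,ξ), then F = 0. -/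
/-!
The form `G x y := F x y ξ` is alternating, kills `ξ`, and changes sign under `φ`. As
`φ (φ e) ≡ -e` modulo `ξ`, this gives `G e (φ e) = -G (φ e) (φ (φ e)) = G (φ e) e = -G e (φ e)`,
so `G` vanishes on the basis `{ξ, e, φ e}` and hence everywhere (linearity in one slot suffices
for an alternating form). The first 𝓕₇-condition then expresses `F` through `G`.
-/

section

variable {V : Type*} [AddCommGroup V] [Module ℝ V] {G : V → V → ℝ}

theorem eq_zero_of_isLinearMap_of_basis {ι : Type*} (b : Module.Basis ι ℝ V) {f : V → ℝ}
    (hf : IsLinearMap ℝ f) (h : ∀ i, f (b i) = 0) (y : V) : f y = 0 :=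
  LinearMap.congr_fun (b.ext (f₁ := hf.mk' f) (f₂ := 0) h) y

theorem eq_zero_of_antisymm_of_basis {ι : Type*} (b : Module.Basis ι ℝ V)
    (hlin : ∀ x, IsLinearMap ℝ (G x)) (hanti : ∀ x y, G x y = -G y x)
    (hb : ∀ i j, G (b i) (b j) = 0) (x y : V) : G x y = 0 := by
  have hright : ∀ j, G x (b j) = 0 := fun j => by
    rw [hanti, eq_zero_of_isLinearMap_of_basis b (hlin (b j)) (hb j) x, neg_zero]
  exact eq_zero_of_isLinearMap_of_basis b (hlin x) hright y

theorem apply_self_apply_eq_zero_of_anti_invariant {φ : V → V} {ξ : V} {η : V → ℝ}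
    (hφ2 : ∀ x, φ (φ x) = -x + η x • ξ) (hlin : ∀ x, IsLinearMap ℝ (G x))
    (hanti : ∀ x y, G x y = -G y x) (hφanti : ∀ x y, G x y = -G (φ x) (φ y))
    (hξ : ∀ x, G x ξ = 0) (e : V) : G e (φ e) = 0 := by
  have hlin' := hlin (φ e)
  have h : G e (φ e) = G (φ e) e := by
    rw [hφanti, hφ2, hlin'.map_add, hlin'.map_neg, hlin'.map_smul, hξ]
    ring
  linarith [hanti e (φ e)]

theorem apply_basis_eq_zero_of_anti_invariant {φ : V → V} {ξ : V} {η : V → ℝ} {e : V}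
    (b : Module.Basis (Fin 3) ℝ V) (hb0 : b 0 = ξ) (hb1 : b 1 = e) (hb2 : b 2 = φ e)
    (hφ2 : ∀ x, φ (φ x) = -x + η x • ξ) (hlin : ∀ x, IsLinearMap ℝ (G x))
    (hanti : ∀ x y, G x y = -G y x) (hφanti : ∀ x y, G x y = -G (φ x) (φ y))
    (hξ : ∀ x, G x ξ = 0) (i j : Fin 3) : G (b i) (b j) = 0 := by
  have hdiag : ∀ x, G x x = 0 := fun x => by linarith [hanti x x]
  have hξx : ∀ x, G ξ x = 0 := fun x => by rw [hanti, hξ, neg_zero]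
  have heφe := apply_self_apply_eq_zero_of_anti_invariant hφ2 hlin hanti hφanti hξ e
  have hφee : G (φ e) e = 0 := by rw [hanti, heφe, neg_zero]
  fin_cases i <;> fin_cases j <;>
    simp only [Fin.zero_eta, Fin.mk_one, Fin.reduceFinMk, hb0, hb1, hb2] <;>
    first | exact hdiag _ | exact hξx _ | exact hξ _ | exact heφe | exact hφee

end

theorem dim3_F7_zero_general {V : Type*} [AddCommGroup V] [Module ℝ V]
    (φ : V →ₗ[ℝ] V) (ξ : V) (η : V →ₗ[ℝ] ℝ)
    (hφ2 : ∀ x, φ (φ x) = -x + η x • ξ)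
    (hηξ : η ξ = 1)
    (e : V) (b : Module.Basis (Fin 3) ℝ V)
    (hb0 : b 0 = ξ) (hb1 : b 1 = e) (hb2 : b 2 = φ e)
    (F : V → V → V → ℝ)
    (hF2 : ∀ x z, IsLinearMap ℝ (fun y => F x y z))
    (hF7a : ∀ x y z, F x y z = F x y ξ * η z + F x z ξ * η y)
    (hF7b : ∀ x y, F x y ξ = -(F y x ξ))
    (hF7c : ∀ x y, F x y ξ = -(F (φ x) (φ y) ξ)) :
    ∀ x y z, F x y z = 0 := by
  have hξ : ∀ x, F x ξ ξ = 0 := fun x => by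
    have h := hF7a x ξ ξ
    rw [hηξ] at h
    linarith
  have hbasis := apply_basis_eq_zero_of_anti_invariant (G := fun x y => F x y ξ) b hb0 hb1 hb2
    hφ2 (fun x => hF2 x ξ) hF7b hF7c hξ
  have hG := eq_zero_of_antisymm_of_basis (G := fun x y => F x y ξ) b (fun x => hF2 x ξ) hF7b
    hbasis
  intro x y z
  rw [hF7a x y z, hG x y, hG x z]
  ring

/-- On a 3-dimensional almost contact B-metric vector space, the class 𝓕₇ reduces to
F = 0. -/
theorem dim3_F7_zero {V : Type*} [AddCommGroup V] [Module ℝ V]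
    (φ : V →ₗ[ℝ] V) (ξ : V) (η : V →ₗ[ℝ] ℝ) (g : V →ₗ[ℝ] V →ₗ[ℝ] ℝ)
    (hφξ : φ ξ = 0) (hφ2 : ∀ x, φ (φ x) = -x + η x • ξ)
    (hηφ : ∀ x, η (φ x) = 0) (hηξ : η ξ = 1)
    (hsym : ∀ x y, g x y = g y x)
    (hcompat : ∀ x y, g (φ x) (φ y) = -(g x y) + η x * η y)
    (e : V) (b : Module.Basis (Fin 3) ℝ V)
    (hb0 : b 0 = ξ) (hb1 : b 1 = e) (hb2 : b 2 = φ e)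
    (hg00 : g ξ ξ = 1) (hg11 : g e e = 1) (hg22 : g (φ e) (φ e) = -1)
    (hg01 : g ξ e = 0) (hg02 : g ξ (φ e) = 0) (hg12 : g e (φ e) = 0)
    (F : V → V → V → ℝ)
    (hF1 : ∀ y z, IsLinearMap ℝ (fun x => F x y z))
    (hF2 : ∀ x z, IsLinearMap ℝ (fun y => F x y z))
    (hF3 : ∀ x y, IsLinearMap ℝ (fun z => F x y z))
    (hFsym : ∀ x y z, F x y z = F x z y)
    (hFprop : ∀ x y z, F x y z = F x (φ y) (φ z) + η y * F x ξ z + η z * F x y ξ)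
    (hF7a : ∀ x y z, F x y z = F x y ξ * η z + F x z ξ * η y)
    (hF7b : ∀ x y, F x y ξ = -(F y x ξ))
    (hF7c : ∀ x y, F x y ξ = -(F (φ x) (φ y) ξ)) :
    ∀ x y z, F x y z = 0 :=
  dim3_F7_zero_general φ ξ η hφ2 hηξ e b hb0 hb1 hb2 F hF2 hF7a hF7b hF7c
end
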